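/- Let a, b, c, d > 0 and define G_B : ℝ² → ℝ² by G_B(u) = |u|^{-1} ((a u₁² + b u₂²) u₁, (c u₁² + d u₂²) u₂) for u ≠ 0 and G_B(0) = 0. If for every unit vector w = (w₁,w₂) ∈ ℝ² one has (b + c - (a w₁² + b w₂² + c w₁² + d w₂²)/2)² ≤ 4ad, then G_B is monotone, i.e., (G_B(u) - G_B(v))·(u - v) ≥ 0 for all u, v ∈ ℝ². -/

import Mathlib

/-!
For `u = v + e`, `⟪G_B u - G_B v, e⟫ = φ 1 - φ 0` with `φ t = ⟪G_B (v + t • e), e⟫`, so it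
suffices that `φ` is monotone on `[0, 1]`. Away from the origin `φ'` is `|x|⁻³` times a binary
quadratic form in `e`, and the unit-vector hypothesis, homogenized and multiplied by `x₁² x₂²`,
yields its discriminant condition. If the segment meets the origin, `⟪G_B (s • e), e⟫` has the
sign of `s`, so `φ 0 ≤ 0 ≤ φ 1`.
-/

open Classical

/-- `G_B(u) = |u|⁻¹ ((a u₁² + b u₂²) u₁, (c u₁² + d u₂²) u₂)`, with `G_B(0) = 0`. -/
noncomputable def GB2 (a b c d : ℝ) (u : EuclideanSpace ℝ (Fin 2)) :
    EuclideanSpace ℝ (Fin 2) :=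
  if u = 0 then 0 else
    ‖u‖⁻¹ • (WithLp.toLp 2 ![(a * (u 0) ^ 2 + b * (u 1) ^ 2) * u 0,
               (c * (u 0) ^ 2 + d * (u 1) ^ 2) * u 1] : EuclideanSpace ℝ (Fin 2))

theorem quadratic_nonneg_of_sq_le_mul {A B C : ℝ} (hA : 0 ≤ A) (hC : 0 ≤ C)
    (hB : B ^ 2 ≤ A * C) (p q : ℝ) : 0 ≤ A * p ^ 2 + 2 * B * p * q + C * q ^ 2 := by
  rcases hA.eq_or_lt with rfl | hA
  · obtain rfl : B = 0 := by nlinarith [sq_nonneg B]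
    nlinarith [mul_nonneg hC (sq_nonneg q)]
  · nlinarith [sq_nonneg (A * p + B * q), mul_nonneg (sub_nonneg.2 hB) (sq_nonneg q)]

theorem HasDerivAt.div_sqrt {f g : ℝ → ℝ} {f' g' t : ℝ} (hf : HasDerivAt f f' t)
    (hg : HasDerivAt g g' t) (hg₀ : 0 < g t) :
    HasDerivAt (fun s => f s / √(g s)) ((2 * f' * g t - f t * g') / (2 * g t * √(g t))) t := by
  have hs := Real.sqrt_pos.2 hg₀
  refine (hf.div (hg.sqrt hg₀.ne') hs.ne').congr_deriv ?_
  field_simp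
  rw [Real.sq_sqrt hg₀.le]
  ring

theorem homogeneous_condition_of_unit_condition {a b c d : ℝ}
    (h : ∀ w : EuclideanSpace ℝ (Fin 2), ‖w‖ = 1 →
      (b + c - (a * (w 0) ^ 2 + b * (w 1) ^ 2 + c * (w 0) ^ 2 + d * (w 1) ^ 2) / 2) ^ 2
        ≤ 4 * a * d) (x y : ℝ) :
    ((b + c) * (x ^ 2 + y ^ 2) - ((a + c) * x ^ 2 + (b + d) * y ^ 2) / 2) ^ 2
      ≤ 4 * a * d * (x ^ 2 + y ^ 2) ^ 2 := by
  set u : EuclideanSpace ℝ (Fin 2) := !₂[x, y]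
  have hu : ‖u‖ ^ 2 = x ^ 2 + y ^ 2 := by
    simp [u, EuclideanSpace.norm_sq_eq, Fin.sum_univ_two]
  rcases eq_or_ne u 0 with hu0 | hu0
  · obtain ⟨rfl, rfl⟩ : x = 0 ∧ y = 0 := by simpa [u] using hu0
    simp
  have hw := h (‖u‖⁻¹ • u) (norm_smul_inv_norm hu0)
  rw [← hu]
  calc _ = (‖u‖ ^ 2) ^ 2 * (b + c - (a * (‖u‖⁻¹ * x) ^ 2 + b * (‖u‖⁻¹ * y) ^ 2
          + c * (‖u‖⁻¹ * x) ^ 2 + d * (‖u‖⁻¹ * y) ^ 2) / 2) ^ 2 := by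
        rw [← mul_pow]; congr 1; field_simp; rw [hu]; ring
    _ ≤ (‖u‖ ^ 2) ^ 2 * (4 * a * d) := by gcongr; simpa [u] using hw
    _ = _ := by ring

section Pairing

variable {a b c d : ℝ}

/-- `⟪G_B (x, y), (p, q)⟫`; at the origin the junk value `_ / √0 = 0` is the convention
`G_B 0 = 0`. -/
noncomputable def gbPairing (a b c d x y p q : ℝ) : ℝ :=
  ((a * x ^ 2 + b * y ^ 2) * x * p + (c * x ^ 2 + d * y ^ 2) * y * q) / √(x ^ 2 + y ^ 2)

theorem inner_GB2 (u e : EuclideanSpace ℝ (Fin 2)) :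
    inner ℝ (GB2 a b c d u) e = gbPairing a b c d (u 0) (u 1) (e 0) (e 1) := by
  rcases eq_or_ne u 0 with rfl | hu
  · simp [GB2, gbPairing]
  have hnorm : ‖u‖ = √(u 0 ^ 2 + u 1 ^ 2) := by
    simp [EuclideanSpace.norm_eq, Fin.sum_univ_two]
  simp only [GB2, if_neg hu, gbPairing, ← hnorm, PiLp.inner_apply, Fin.sum_univ_two,
    PiLp.smul_apply, smul_eq_mul, RCLike.inner_apply, conj_trivial, Matrix.cons_val_zero,
    Matrix.cons_val_one, Matrix.cons_val_fin_one]
  ring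

theorem gbPairing_neg (x y p q : ℝ) :
    gbPairing a b c d (-x) (-y) p q = -gbPairing a b c d x y p q := by
  simp only [gbPairing, neg_sq]
  ring

theorem gbPairing_mul_self_nonneg (ha : 0 ≤ a) (hb : 0 ≤ b) (hc : 0 ≤ c) (hd : 0 ≤ d)
    {s : ℝ} (hs : 0 ≤ s) (p q : ℝ) : 0 ≤ gbPairing a b c d (s * p) (s * q) p q := by
  refine div_nonneg ?_ (Real.sqrt_nonneg _)
  have : (a * (s * p) ^ 2 + b * (s * q) ^ 2) * (s * p) * p
      + (c * (s * p) ^ 2 + d * (s * q) ^ 2) * (s * q) * q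
      = s ^ 3 * (a * p ^ 4 + (b + c) * p ^ 2 * q ^ 2 + d * q ^ 4) := by ring
  rw [this]
  positivity

noncomputable def gbDerivNumerator (a b c d x y p q : ℝ) : ℝ :=
  2 * (((2 * a * x * p + 2 * b * y * q) * x + (a * x ^ 2 + b * y ^ 2) * p) * p
      + ((2 * c * x * p + 2 * d * y * q) * y + (c * x ^ 2 + d * y ^ 2) * q) * q) * (x ^ 2 + y ^ 2)
    - ((a * x ^ 2 + b * y ^ 2) * x * p + (c * x ^ 2 + d * y ^ 2) * y * q) * (2 * (x * p + y * q))

theorem hasDerivAt_gbPairing_line {x y p q t : ℝ} (ht : 0 < (x + t * p) ^ 2 + (y + t * q) ^ 2) :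
    HasDerivAt (fun t => gbPairing a b c d (x + t * p) (y + t * q) p q)
      (gbDerivNumerator a b c d (x + t * p) (y + t * q) p q /
        (2 * ((x + t * p) ^ 2 + (y + t * q) ^ 2) * √((x + t * p) ^ 2 + (y + t * q) ^ 2))) t := by
  have hX : HasDerivAt (fun t => x + t * p) p t := by
    simpa using ((hasDerivAt_id t).mul_const p).const_add x
  have hY : HasDerivAt (fun t => y + t * q) q t := by
    simpa using ((hasDerivAt_id t).mul_const q).const_add y
  have hP := (((((hX.pow 2).const_mul a).add ((hY.pow 2).const_mul b)).mul hX).mul_const p).add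
    ((((((hX.pow 2).const_mul c).add ((hY.pow 2).const_mul d)).mul hY).mul_const q))
  refine (hP.div_sqrt ((hX.pow 2).add (hY.pow 2)) ht).congr_deriv ?_
  simp only [gbDerivNumerator, Pi.add_apply, Pi.mul_apply, Pi.pow_apply]
  ring

theorem gbDerivNumerator_nonneg (ha : 0 ≤ a) (hb : 0 ≤ b) (hc : 0 ≤ c) (hd : 0 ≤ d) {x y : ℝ}
    (hH : ((b + c) * (x ^ 2 + y ^ 2) - ((a + c) * x ^ 2 + (b + d) * y ^ 2) / 2) ^ 2
      ≤ 4 * a * d * (x ^ 2 + y ^ 2) ^ 2) (p q : ℝ) :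
    0 ≤ gbDerivNumerator a b c d x y p q := by
  -- the numerator is `2 (A p² + 2 B p q + C q²)`, and `B² ≤ A C` follows from `hH` times `x² y²`
  set A := a * x ^ 2 * (2 * x ^ 2 + 3 * y ^ 2) + b * y ^ 4
  set C := c * x ^ 4 + d * y ^ 2 * (3 * x ^ 2 + 2 * y ^ 2)
  set B := x * y * ((b + c) * (x ^ 2 + y ^ 2) - ((a + c) * x ^ 2 + (b + d) * y ^ 2) / 2)
  have hB : B ^ 2 ≤ A * C := calc
    B ^ 2 ≤ 4 * a * d * (x * y * (x ^ 2 + y ^ 2)) ^ 2 := by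
      simp only [B, mul_pow]
      have := mul_le_mul_of_nonneg_left hH (by positivity : 0 ≤ x ^ 2 * y ^ 2)
      linarith
    _ ≤ A * C := by
      have : A * C - 4 * a * d * (x * y * (x ^ 2 + y ^ 2)) ^ 2
          = a * d * x ^ 2 * y ^ 2 * (2 * x ^ 4 + 5 * x ^ 2 * y ^ 2 + 2 * y ^ 4)
            + a * c * x ^ 6 * (2 * x ^ 2 + 3 * y ^ 2) + b * c * x ^ 4 * y ^ 4
            + b * d * y ^ 6 * (3 * x ^ 2 + 2 * y ^ 2) := by ring
      have : 0 ≤ A * C - 4 * a * d * (x * y * (x ^ 2 + y ^ 2)) ^ 2 := by rw [this]; positivity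
      linarith
  have hQ := quadratic_nonneg_of_sq_le_mul (by positivity) (by positivity) hB p q
  have : gbDerivNumerator a b c d x y p q = 2 * (A * p ^ 2 + 2 * B * p * q + C * q ^ 2) := by
    simp only [gbDerivNumerator, A, B, C]; ring
  rw [this]
  positivity

theorem gbPairing_le_gbPairing_add (ha : 0 ≤ a) (hb : 0 ≤ b) (hc : 0 ≤ c) (hd : 0 ≤ d)
    (hH : ∀ x y : ℝ, ((b + c) * (x ^ 2 + y ^ 2) - ((a + c) * x ^ 2 + (b + d) * y ^ 2) / 2) ^ 2
      ≤ 4 * a * d * (x ^ 2 + y ^ 2) ^ 2) (x y p q : ℝ) :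
    gbPairing a b c d x y p q ≤ gbPairing a b c d (x + p) (y + q) p q := by
  by_cases hzero : ∃ t ∈ Set.Icc (0 : ℝ) 1, (x + t * p) ^ 2 + (y + t * q) ^ 2 = 0
  · obtain ⟨t, ⟨ht₀, ht₁⟩, hxy⟩ := hzero
    obtain ⟨hx, hy⟩ : x + t * p = 0 ∧ y + t * q = 0 := by
      simpa using (add_eq_zero_iff_of_nonneg (sq_nonneg _) (sq_nonneg _)).1 hxy
    obtain rfl : x = -(t * p) := by linarith
    obtain rfl : y = -(t * q) := by linarith
    rw [gbPairing_neg, show -(t * p) + p = (1 - t) * p by ring,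
      show -(t * q) + q = (1 - t) * q by ring]
    linarith [gbPairing_mul_self_nonneg ha hb hc hd ht₀ p q,
      gbPairing_mul_self_nonneg ha hb hc hd (sub_nonneg.2 ht₁) p q]
  · push Not at hzero
    have hpos : ∀ t ∈ Set.Icc (0 : ℝ) 1, 0 < (x + t * p) ^ 2 + (y + t * q) ^ 2 :=
      fun t ht => (by positivity : (0 : ℝ) ≤ _).lt_of_ne' (hzero t ht)
    have hmono : MonotoneOn (fun t => gbPairing a b c d (x + t * p) (y + t * q) p q)
        (Set.Icc 0 1) := by
      refine monotoneOn_of_hasDerivWithinAt_nonneg (convex_Icc 0 1)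
        (fun t ht => (hasDerivAt_gbPairing_line (hpos t ht)).continuousAt.continuousWithinAt)
        (fun t ht => (hasDerivAt_gbPairing_line (hpos t (interior_subset ht))).hasDerivWithinAt)
        fun t ht => ?_
      have hS := hpos t (interior_subset ht)
      exact div_nonneg (gbDerivNumerator_nonneg ha hb hc hd (hH _ _) p q) (by positivity)
    simpa using hmono (by norm_num) (by norm_num) zero_le_one

end Pairing

theorem GB2_monotone_of_unit_condition (a b c d : ℝ)
    (ha : 0 < a) (hb : 0 < b) (hc : 0 < c) (hd : 0 < d)
    (h : ∀ w : EuclideanSpace ℝ (Fin 2), ‖w‖ = 1 →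
      (b + c - (a * (w 0) ^ 2 + b * (w 1) ^ 2 + c * (w 0) ^ 2 + d * (w 1) ^ 2) / 2) ^ 2
        ≤ 4 * a * d) :
    ∀ u v : EuclideanSpace ℝ (Fin 2),
      0 ≤ @inner ℝ _ _ (GB2 a b c d u - GB2 a b c d v) (u - v) := by
  intro u v
  have hline := gbPairing_le_gbPairing_add ha.le hb.le hc.le hd.le
    (homogeneous_condition_of_unit_condition h) (v 0) (v 1) (u 0 - v 0) (u 1 - v 1)
  rw [inner_sub_left, inner_GB2, inner_GB2, sub_nonneg]
  simpa using hline
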